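/- arXiv:1512.07880 — 8 statements merged into one kernel-verified Lean document; each statement's English description precedes it below -/
import Mathlib

section
/- The integral of (1 - x^(2/n))^(n/2) over the interval [0, 1] equals n²·Γ(n/2)² / (4·n!). -/
/-!
Substituting `x = y ^ p` turns `∫₀¹ (1 - x ^ (1/p)) ^ q dx` into `p · B(p, q + 1)`, and the Beta
integral equals `Γ(p) Γ(q + 1) / Γ(p + q + 1)`. With `p = q = n / 2` this is
`Γ(n/2 + 1)² / Γ(n + 1) = (n/2)² Γ(n/2)² / n!`.
-/

open MeasureTheory Set Real intervalIntegral

lemma integral_rpow_mul_one_sub_rpow_eq_Gamma {a b : ℝ} (ha : 0 < a) (hb : 0 < b) :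
    ∫ x in (0:ℝ)..1, x ^ (a - 1) * (1 - x) ^ (b - 1) = Gamma a * Gamma b / Gamma (a + b) := by
  apply Complex.ofReal_injective
  have hbeta := Complex.betaIntegral_eq_Gamma_mul_div a b (by simpa) (by simpa)
  rw [Complex.betaIntegral] at hbeta
  push_cast [← Complex.Gamma_ofReal]
  rw [← hbeta, ← integral_ofReal]
  refine integral_congr fun x hx => ?_
  rw [uIcc_of_le zero_le_one] at hx
  push_cast [Complex.ofReal_cpow hx.1, Complex.ofReal_cpow (sub_nonneg.2 hx.2)]
  rfl

lemma integral_comp_rpow_zero_one {E : Type*} [NormedAddCommGroup E] [NormedSpace ℝ E]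
    (g : ℝ → E) {p : ℝ} (hp : 0 < p) :
    ∫ x in (0:ℝ)..1, (p * x ^ (p - 1)) • g (x ^ p) = ∫ y in (0:ℝ)..1, g y := by
  have himage : (· ^ p) '' Ioc 0 1 = Ioc (0:ℝ) 1 := by
    ext y
    constructor
    · rintro ⟨x, hx, rfl⟩
      exact ⟨rpow_pos_of_pos hx.1 p, rpow_le_one hx.1.le hx.2 hp.le⟩
    · intro hy
      refine ⟨y ^ p⁻¹, ⟨rpow_pos_of_pos hy.1 _, rpow_le_one hy.1.le hy.2 (by positivity)⟩, ?_⟩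
      exact rpow_inv_rpow hy.1.le hp.ne'
  have hsubst := integral_image_eq_integral_abs_deriv_smul (measurableSet_Ioc (a := 0) (b := 1))
    (fun x hx => (hasDerivAt_rpow_const (Or.inl hx.1.ne')).hasDerivWithinAt)
    ((rpow_left_injOn hp.ne').mono fun x (hx : x ∈ Ioc 0 1) => hx.1.le) g
  rw [himage] at hsubst
  rw [integral_of_le zero_le_one, integral_of_le zero_le_one, hsubst]
  refine setIntegral_congr_fun measurableSet_Ioc fun x hx => ?_
  rw [abs_of_nonneg (by have := hx.1; positivity)]

theorem integral_one_sub_rpow_inv_rpow {p q : ℝ} (hp : 0 < p) (hq : -1 < q) :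
    ∫ x in (0:ℝ)..1, (1 - x ^ p⁻¹) ^ q
      = Gamma (p + 1) * Gamma (q + 1) / Gamma (p + q + 1) := by
  calc ∫ x in (0:ℝ)..1, (1 - x ^ p⁻¹) ^ q
      = ∫ y in (0:ℝ)..1, (p * y ^ (p - 1)) • (1 - (y ^ p) ^ p⁻¹) ^ q :=
        (integral_comp_rpow_zero_one _ hp).symm
    _ = p * ∫ y in (0:ℝ)..1, y ^ (p - 1) * (1 - y) ^ (q + 1 - 1) := by
        rw [← intervalIntegral.integral_const_mul]
        refine integral_congr fun y hy => ?_
        rw [uIcc_of_le zero_le_one] at hy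
        simp only [rpow_rpow_inv hy.1 hp.ne', add_sub_cancel_right, smul_eq_mul]
        ring
    _ = Gamma (p + 1) * Gamma (q + 1) / Gamma (p + q + 1) := by
        rw [integral_rpow_mul_one_sub_rpow_eq_Gamma hp (by linarith), Gamma_add_one hp.ne',
          add_assoc]
        ring

theorem stmt_1 (n : ℕ) (hn : 1 ≤ n) :
    ∫ x in (0:ℝ)..1, (1 - x ^ ((2:ℝ)/n)) ^ ((n:ℝ)/2)
      = (n : ℝ)^2 * Real.Gamma ((n : ℝ)/2) ^ 2 / (4 * (Nat.factorial n : ℝ)) := by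
  have hp : (0:ℝ) < n / 2 := by positivity
  have hGamma : Gamma ((n:ℝ) / 2 + n / 2 + 1) = n.factorial := by
    rw [add_halves]
    exact_mod_cast Gamma_nat_eq_factorial n
  rw [← inv_div, integral_one_sub_rpow_inv_rpow hp (by linarith), hGamma, Gamma_add_one hp.ne']
  ring
end

section
/- Let f be a continuous function on the closed unit ball B^n in ℝ^n, and suppose that for some natural number G, every set of the form {x ∈ B^n : f(x) ≥ 1/m} (m ∈ ℕ, m ≥ 1) has at most G connected components. Then the open set {x ∈ B^n : f(x) > 0} has at most G connected components. -/
/-! Finitely many points of `{f > 0}` all lie in a single superlevel set `{f ≥ 1/m}`, which is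
contained in `{f > 0}`; two of them share a component of the smaller set, hence of the larger. -/

theorem connectedComponentIn_eq_of_subset {X : Type*} [TopologicalSpace X] {s t : Set X}
    {x y : X} (hst : s ⊆ t) (hy : y ∈ s)
    (h : connectedComponentIn s x = connectedComponentIn s y) :
    connectedComponentIn t x = connectedComponentIn t y :=
  connectedComponentIn_eq <| connectedComponentIn_mono x hst <| h ▸ mem_connectedComponentIn hy

theorem exists_one_div_le_of_forall_pos {ι : Type*} [Finite ι] (v : ι → ℝ) (hv : ∀ i, 0 < v i) :
    ∃ m : ℕ, 1 ≤ m ∧ ∀ i, 1 / (m : ℝ) ≤ v i := by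
  cases isEmpty_or_nonempty ι
  · exact ⟨1, le_rfl, isEmptyElim⟩
  obtain ⟨i₀, hi₀⟩ := Finite.exists_min v
  obtain ⟨m, hm⟩ := exists_nat_one_div_lt (hv i₀)
  refine ⟨m + 1, Nat.le_add_left 1 m, fun i => ?_⟩
  exact_mod_cast hm.le.trans (hi₀ i)

theorem stmt_6_general (n G : ℕ) (f : EuclideanSpace ℝ (Fin n) → ℝ)
    (h : ∀ m : ℕ, 1 ≤ m →
      ∀ g : Fin (G + 1) → EuclideanSpace ℝ (Fin n),
        (∀ i, g i ∈ Metric.closedBall (0 : EuclideanSpace ℝ (Fin n)) 1 ∧ (1 : ℝ) / m ≤ f (g i)) →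
        ∃ i j, i ≠ j ∧
          connectedComponentIn
            {x ∈ Metric.closedBall (0 : EuclideanSpace ℝ (Fin n)) 1 | (1 : ℝ) / m ≤ f x} (g i) =
          connectedComponentIn
            {x ∈ Metric.closedBall (0 : EuclideanSpace ℝ (Fin n)) 1 | (1 : ℝ) / m ≤ f x} (g j)) :
    ∀ g : Fin (G + 1) → EuclideanSpace ℝ (Fin n),
      (∀ i, g i ∈ Metric.closedBall (0 : EuclideanSpace ℝ (Fin n)) 1 ∧ 0 < f (g i)) →
      ∃ i j, i ≠ j ∧
        connectedComponentIn
          {x ∈ Metric.closedBall (0 : EuclideanSpace ℝ (Fin n)) 1 | 0 < f x} (g i) =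
        connectedComponentIn
          {x ∈ Metric.closedBall (0 : EuclideanSpace ℝ (Fin n)) 1 | 0 < f x} (g j) := by
  intro g hg
  obtain ⟨m, hm, hgm⟩ := exists_one_div_le_of_forall_pos (fun i => f (g i)) fun i => (hg i).2
  obtain ⟨i, j, hij, hcomp⟩ := h m hm g fun i => ⟨(hg i).1, hgm i⟩
  have hm_pos : (0 : ℝ) < 1 / m := one_div_pos.mpr (by exact_mod_cast hm)
  refine ⟨i, j, hij, connectedComponentIn_eq_of_subset ?_ ?_ hcomp⟩
  · exact fun x hx => ⟨hx.1, hm_pos.trans_le hx.2⟩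
  · exact ⟨(hg j).1, hgm j⟩

/-- If every superlevel set `{x ∈ B^n : f x ≥ 1/m}` has at most `G` connected
components, then `{x ∈ B^n : f x > 0}` has at most `G` connected components.
"At most `G` components" is encoded by: among any `G+1` points of the set, two
lie in the same connected component (connected component within the set). -/
theorem stmt_6 (n G : ℕ) (f : EuclideanSpace ℝ (Fin n) → ℝ)
    (hf : ContinuousOn f (Metric.closedBall (0 : EuclideanSpace ℝ (Fin n)) 1))
    (h : ∀ m : ℕ, 1 ≤ m →
      ∀ g : Fin (G + 1) → EuclideanSpace ℝ (Fin n),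
        (∀ i, g i ∈ Metric.closedBall (0 : EuclideanSpace ℝ (Fin n)) 1 ∧ (1 : ℝ) / m ≤ f (g i)) →
        ∃ i j, i ≠ j ∧
          connectedComponentIn
            {x ∈ Metric.closedBall (0 : EuclideanSpace ℝ (Fin n)) 1 | (1 : ℝ) / m ≤ f x} (g i) =
          connectedComponentIn
            {x ∈ Metric.closedBall (0 : EuclideanSpace ℝ (Fin n)) 1 | (1 : ℝ) / m ≤ f x} (g j)) :
    ∀ g : Fin (G + 1) → EuclideanSpace ℝ (Fin n),
      (∀ i, g i ∈ Metric.closedBall (0 : EuclideanSpace ℝ (Fin n)) 1 ∧ 0 < f (g i)) →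
      ∃ i j, i ≠ j ∧
        connectedComponentIn
          {x ∈ Metric.closedBall (0 : EuclideanSpace ℝ (Fin n)) 1 | 0 < f x} (g i) =
        connectedComponentIn
          {x ∈ Metric.closedBall (0 : EuclideanSpace ℝ (Fin n)) 1 | 0 < f x} (g j) :=
  stmt_6_general n G f h
end

section
/- Let a_1, ..., a_n be positive reals and let N(λ) denote the number of n-tuples (k_1, ..., k_n) of nonnegative integers with Σ_{i=1}^n a_i(2k_i + 1) ≤ λ. Then N(λ)/λ^n → 1/(2^n · n! · a_1·...·a_n) as λ → ∞. -/
/-!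
Write `b = 2a` and `A = ∑ aᵢ`, so that `N(λ)` counts the `k ∈ ℕⁿ` with `∑ bᵢ kᵢ ≤ λ - A`.
For the count `L_b(t)` of such lattice points one proves, by induction on `n`,
`tⁿ ≤ n! ∏ bᵢ · L_b(t) ≤ (t + ∑ bᵢ)ⁿ` for `t ≥ 0`: slicing by the value `j` of the first
coordinate gives `L_b(t) = ∑_{j ≤ t/b₀} L_{b'}(t - b₀ j)`, and the resulting sums of
`(n-1)`-st powers are upper and lower Riemann sums for `∫ xⁿ⁻¹ dx`, compared with `tⁿ / n`
by telescoping. Dividing by `λⁿ` squeezes `N(λ)/λⁿ` to `1 / (n! ∏ bᵢ)`.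
-/

open Filter Finset Topology
open scoped Nat

theorem pow_mul_sub_le_pow_succ_sub_pow_succ (n : ℕ) {x y : ℝ} (hx : 0 ≤ x) (hxy : x ≤ y) :
    (n + 1) * x ^ n * (y - x) ≤ y ^ (n + 1) - x ^ (n + 1) := by
  rw [← geom_sum₂_mul]
  gcongr ?_ * _
  calc (n + 1) * x ^ n = ∑ _i ∈ range (n + 1), x ^ n := by simp
    _ ≤ ∑ i ∈ range (n + 1), y ^ i * x ^ (n + 1 - 1 - i) := by
      refine sum_le_sum fun i hi => ?_
      have hi : i ≤ n := Nat.lt_succ_iff.mp (mem_range.mp hi)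
      calc x ^ n = x ^ i * x ^ (n + 1 - 1 - i) := by rw [← pow_add]; congr 1; omega
        _ ≤ y ^ i * x ^ (n + 1 - 1 - i) := by gcongr

theorem pow_succ_sub_pow_succ_le (n : ℕ) {x y : ℝ} (hx : 0 ≤ x) (hxy : x ≤ y) :
    y ^ (n + 1) - x ^ (n + 1) ≤ (n + 1) * y ^ n * (y - x) := by
  have h := (le_abs_self _).trans (abs_pow_sub_pow_le y x (n + 1))
  rw [abs_of_nonneg (sub_nonneg.2 hxy), abs_of_nonneg hx, abs_of_nonneg (hx.trans hxy),
    max_eq_left hxy, Nat.add_sub_cancel] at h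
  push_cast at h
  linarith

theorem pow_succ_le_mul_sum_pow (n m : ℕ) {b s : ℝ} (hb : 0 ≤ b) (hm : b * m ≤ s)
    (hm' : s ≤ b * (m + 1)) :
    s ^ (n + 1) ≤ (n + 1) * b * ∑ j ∈ range (m + 1), (s - b * j) ^ n := by
  set u : ℕ → ℝ := fun j => max (s - b * j) 0
  have hu : ∀ j ≤ m, u j = s - b * j := fun j hj =>
    max_eq_left (by nlinarith [(Nat.cast_le (α := ℝ)).2 hj])
  have hu_zero : u 0 = s := by simpa using hu 0 (Nat.zero_le m)
  have hu_last : u (m + 1) = 0 := by simp only [u]; push_cast; exact max_eq_right (by linarith)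
  calc s ^ (n + 1) = ∑ j ∈ range (m + 1), (u j ^ (n + 1) - u (j + 1) ^ (n + 1)) := by
        rw [sum_range_sub' (fun j => u j ^ (n + 1)), hu_zero, hu_last]; simp
    _ ≤ ∑ j ∈ range (m + 1), (n + 1) * b * (s - b * j) ^ n := by
      refine sum_le_sum fun j hj => ?_
      have hj := hu j (Nat.lt_succ_iff.mp (mem_range.mp hj))
      have h_step : s - b * j - b ≤ u (j + 1) := by simp only [u]; push_cast; grind
      have h_mono : u (j + 1) ≤ u j := by simp only [u]; push_cast; gcongr; linarith
      calc u j ^ (n + 1) - u (j + 1) ^ (n + 1) ≤ (n + 1) * u j ^ n * (u j - u (j + 1)) :=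
            pow_succ_sub_pow_succ_le n (le_max_right _ _) h_mono
        _ ≤ (n + 1) * u j ^ n * b := by
          have : 0 ≤ u j := le_max_right _ _
          gcongr; linarith
        _ = (n + 1) * b * (s - b * j) ^ n := by rw [hj]; ring
    _ = (n + 1) * b * ∑ j ∈ range (m + 1), (s - b * j) ^ n := (mul_sum ..).symm

theorem mul_sum_pow_le_pow_succ (n m : ℕ) {b s : ℝ} (hb : 0 ≤ b) (hm : b * m ≤ s) :
    (n + 1) * b * ∑ j ∈ range (m + 1), (s - b * j) ^ n ≤ (s + b) ^ (n + 1) := by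
  set v : ℕ → ℝ := fun j => s + b - b * j
  have hv_succ : ∀ j : ℕ, v (j + 1) = s - b * j := fun j => by simp only [v]; push_cast; ring
  calc (n + 1) * b * ∑ j ∈ range (m + 1), (s - b * j) ^ n
      = ∑ j ∈ range (m + 1), (n + 1) * v (j + 1) ^ n * (v j - v (j + 1)) := by
        rw [mul_sum]; refine sum_congr rfl fun j _ => ?_
        rw [hv_succ]; simp only [v]; ring
    _ ≤ ∑ j ∈ range (m + 1), (v j ^ (n + 1) - v (j + 1) ^ (n + 1)) := by
      refine sum_le_sum fun j hj => pow_mul_sub_le_pow_succ_sub_pow_succ n ?_ ?_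
      · have hj : (j : ℝ) ≤ m := Nat.cast_le.2 (Nat.lt_succ_iff.mp (mem_range.mp hj))
        rw [hv_succ]; nlinarith
      · rw [hv_succ]; simp only [v]; linarith
    _ = (s + b) ^ (n + 1) - v (m + 1) ^ (n + 1) := by
      rw [sum_range_sub' (fun j => v j ^ (n + 1))]; simp [v]
    _ ≤ (s + b) ^ (n + 1) := by
      rw [hv_succ]; linarith [pow_nonneg (sub_nonneg.2 hm) (n + 1)]

theorem mul_le_of_le_floor_div {b t : ℝ} (hb : 0 < b) (ht : 0 ≤ t) {j : ℕ}
    (hj : j ≤ ⌊t / b⌋₊) : b * j ≤ t :=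
  (le_div_iff₀' hb).1 ((Nat.le_floor_iff (div_nonneg ht hb.le)).1 hj)

theorem lt_mul_floor_div_add_one {b : ℝ} (hb : 0 < b) (t : ℝ) : t < b * (⌊t / b⌋₊ + 1) :=
  (div_lt_iff₀' hb).1 (Nat.lt_floor_add_one _)

/-- `Nat.card`: the junk value `0` if the set is infinite, which positive weights `b` rule out. -/
noncomputable def latticeCount {n : ℕ} (b : Fin n → ℝ) (t : ℝ) : ℕ :=
  Nat.card {k : Fin n → ℕ // ∑ i, b i * k i ≤ t}

theorem le_floor_div_of_sum_mul_le {n : ℕ} {b : Fin n → ℝ} {t : ℝ} (hb : ∀ i, 0 < b i)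
    {k : Fin n → ℕ} (hk : ∑ i, b i * k i ≤ t) (i : Fin n) : k i ≤ ⌊t / b i⌋₊ := by
  have hi : b i * k i ≤ t :=
    (single_le_sum (fun j _ => mul_nonneg (hb j).le (k j).cast_nonneg) (mem_univ i)).trans hk
  exact Nat.le_floor ((le_div_iff₀' (hb i)).2 hi)

theorem finite_latticePoints {n : ℕ} {b : Fin n → ℝ} (hb : ∀ i, 0 < b i) (t : ℝ) :
    Finite {k : Fin n → ℕ // ∑ i, b i * k i ≤ t} :=
  Set.Finite.to_subtype <| (Set.Finite.pi fun i => Set.finite_Iic ⌊t / b i⌋₊).subset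
    fun _ hk i _ => le_floor_div_of_sum_mul_le hb hk i

theorem latticeCount_fin_zero (b : Fin 0 → ℝ) {t : ℝ} (ht : 0 ≤ t) : latticeCount b t = 1 := by
  simp [latticeCount, ht]

theorem latticeCount_succ {n : ℕ} {b : Fin (n + 1) → ℝ} (hb : ∀ i, 0 < b i) (t : ℝ) :
    latticeCount b t =
      ∑ j ∈ range (⌊t / b 0⌋₊ + 1), latticeCount (Fin.tail b) (t - b 0 * j) := by
  have e : {k : Fin (n + 1) → ℕ // ∑ i, b i * k i ≤ t} ≃
      Σ j : Fin (⌊t / b 0⌋₊ + 1),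
        {k : Fin n → ℕ // ∑ i, Fin.tail b i * k i ≤ t - b 0 * (j : ℕ)} :=
    { toFun := fun k => ⟨⟨k.1 0, Nat.lt_succ_of_le (le_floor_div_of_sum_mul_le hb k.2 0)⟩,
        ⟨Fin.tail k.1, by
          have := k.2; rw [Fin.sum_univ_succ] at this; simp only [Fin.tail]; linarith⟩⟩
      invFun := fun p => ⟨Fin.cons p.1.1 p.2.1, by
        have := p.2.2; rw [Fin.sum_univ_succ]; simp only [Fin.cons_zero, Fin.cons_succ]
        simp only [Fin.tail] at this; linarith⟩
      left_inv := fun k => Subtype.ext (Fin.cons_self_tail k.1)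
      right_inv := fun _ => rfl }
  have hfin := fun j : Fin (⌊t / b 0⌋₊ + 1) =>
    finite_latticePoints (b := Fin.tail b) (fun i => hb i.succ) (t - b 0 * (j : ℕ))
  rw [latticeCount, Nat.card_congr e, Nat.card_sigma,
    ← Fin.sum_univ_eq_sum_range (fun j => latticeCount (Fin.tail b) (t - b 0 * j))]
  rfl

theorem factorial_mul_prod_mul_latticeCount_succ {n : ℕ} {b : Fin (n + 1) → ℝ}
    (hb : ∀ i, 0 < b i) (t : ℝ) :
    ((n + 1)! : ℝ) * (∏ i, b i) * latticeCount b t =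
      (n + 1) * b 0 * ∑ j ∈ range (⌊t / b 0⌋₊ + 1),
        n ! * (∏ i, Fin.tail b i) * latticeCount (Fin.tail b) (t - b 0 * j) := by
  rw [latticeCount_succ hb, Fin.prod_univ_succ, Nat.factorial_succ]
  push_cast
  rw [mul_sum, mul_sum]
  refine sum_congr rfl fun j _ => ?_
  simp only [Fin.tail]
  ring

theorem pow_le_factorial_mul_prod_mul_latticeCount :
    ∀ {n : ℕ} {b : Fin n → ℝ}, (∀ i, 0 < b i) → ∀ {t : ℝ}, 0 ≤ t →
      t ^ n ≤ n ! * (∏ i, b i) * latticeCount b t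
  | 0, _, _, _, ht => by simp [latticeCount_fin_zero _ ht]
  | n + 1, b, hb, t, ht => by
    have hb0 := hb 0
    rw [factorial_mul_prod_mul_latticeCount_succ hb]
    calc t ^ (n + 1) ≤ (n + 1) * b 0 * ∑ j ∈ range (⌊t / b 0⌋₊ + 1), (t - b 0 * j) ^ n :=
          pow_succ_le_mul_sum_pow n _ hb0.le (mul_le_of_le_floor_div hb0 ht le_rfl)
            (lt_mul_floor_div_add_one hb0 t).le
      _ ≤ _ := by
        gcongr with j hj
        exact pow_le_factorial_mul_prod_mul_latticeCount (fun i => hb i.succ) <| sub_nonneg.2 <|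
          mul_le_of_le_floor_div hb0 ht (Nat.lt_succ_iff.mp (mem_range.mp hj))

theorem factorial_mul_prod_mul_latticeCount_le :
    ∀ {n : ℕ} {b : Fin n → ℝ}, (∀ i, 0 < b i) → ∀ {t : ℝ}, 0 ≤ t →
      n ! * (∏ i, b i) * latticeCount b t ≤ (t + ∑ i, b i) ^ n
  | 0, _, _, _, ht => by simp [latticeCount_fin_zero _ ht]
  | n + 1, b, hb, t, ht => by
    have hb0 := hb 0
    have h_tail : 0 ≤ ∑ i, Fin.tail b i := sum_nonneg fun i _ => (hb i.succ).le
    rw [factorial_mul_prod_mul_latticeCount_succ hb]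
    calc _ ≤ (n + 1) * b 0 * ∑ j ∈ range (⌊t / b 0⌋₊ + 1),
            (t + ∑ i, Fin.tail b i - b 0 * j) ^ n := by
          gcongr with j hj
          rw [← sub_add_eq_add_sub]
          exact factorial_mul_prod_mul_latticeCount_le (fun i => hb i.succ) <| sub_nonneg.2 <|
            mul_le_of_le_floor_div hb0 ht (Nat.lt_succ_iff.mp (mem_range.mp hj))
      _ ≤ (t + ∑ i, Fin.tail b i + b 0) ^ (n + 1) :=
          mul_sum_pow_le_pow_succ n _ hb0.le
            ((mul_le_of_le_floor_div hb0 ht le_rfl).trans (le_add_of_nonneg_right h_tail))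
      _ = (t + ∑ i, b i) ^ (n + 1) := by rw [Fin.sum_univ_succ]; simp only [Fin.tail]; ring

theorem tendsto_add_div_self_pow (c : ℝ) (n : ℕ) :
    Tendsto (fun x : ℝ => ((x + c) / x) ^ n) atTop (𝓝 1) := by
  have h : Tendsto (fun x : ℝ => (1 + c / x) ^ n) atTop (𝓝 ((1 + 0) ^ n)) :=
    ((tendsto_const_nhds.div_atTop tendsto_id).const_add 1).pow n
  rw [add_zero, one_pow] at h
  refine h.congr' ?_
  filter_upwards [eventually_ne_atTop 0] with x hx
  rw [add_div, div_self hx]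

theorem tendsto_div_pow_of_sandwich {f : ℝ → ℝ} {Q A : ℝ} (hQ : 0 < Q) (n : ℕ)
    (hlow : ∀ᶠ x in atTop, (x - A) ^ n ≤ Q * f x) (hup : ∀ᶠ x in atTop, Q * f x ≤ (x + A) ^ n) :
    Tendsto (fun x => f x / x ^ n) atTop (𝓝 Q⁻¹) := by
  have hlim : ∀ c, Tendsto (fun x : ℝ => ((x + c) / x) ^ n / Q) atTop (𝓝 Q⁻¹) := fun c => by
    simpa using (tendsto_add_div_self_pow c n).div_const Q
  have hlim_sub := hlim (-A)
  simp only [← sub_eq_add_neg] at hlim_sub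
  refine tendsto_of_tendsto_of_tendsto_of_le_of_le' hlim_sub (hlim A) ?_ ?_
  · filter_upwards [hlow, eventually_gt_atTop 0] with x hx hx0
    rw [div_pow, div_div, div_le_div_iff₀ (by positivity) (by positivity)]
    linarith [mul_le_mul_of_nonneg_right hx (pow_pos hx0 n).le]
  · filter_upwards [hup, eventually_gt_atTop 0] with x hx hx0
    rw [div_pow, div_div, div_le_div_iff₀ (by positivity) (by positivity)]
    linarith [mul_le_mul_of_nonneg_right hx (pow_pos hx0 n).le]

theorem card_odd_simplex_eq_latticeCount {n : ℕ} (a : Fin n → ℝ) (lam : ℝ) :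
    Nat.card {k : Fin n → ℕ // ∑ i, a i * (2 * (k i : ℝ) + 1) ≤ lam} =
      latticeCount (fun i => 2 * a i) (lam - ∑ i, a i) :=
  Nat.card_congr <| Equiv.subtypeEquivRight fun k => by
    simp only [mul_add, mul_one, sum_add_distrib, le_sub_iff_add_le, mul_left_comm (a _), mul_assoc]

theorem stmt_8_general (n : ℕ) (a : Fin n → ℝ) (ha : ∀ i, 0 < a i) :
    Tendsto
      (fun lam : ℝ =>
        (Nat.card {k : Fin n → ℕ // ∑ i, a i * (2 * (k i : ℝ) + 1) ≤ lam} : ℝ) / lam ^ n)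
      atTop
      (nhds (1 / (2 ^ n * (Nat.factorial n : ℝ) * ∏ i, a i))) := by
  have hb : ∀ i, 0 < 2 * a i := fun i => mul_pos two_pos (ha i)
  have hQ : (n ! : ℝ) * ∏ i, 2 * a i = 2 ^ n * n ! * ∏ i, a i := by
    rw [prod_mul_distrib, prod_const, Finset.card_fin]; ring
  simp_rw [card_odd_simplex_eq_latticeCount, one_div, ← hQ]
  refine tendsto_div_pow_of_sandwich (A := ∑ i, a i)
    (mul_pos (by positivity) (prod_pos fun i _ => hb i)) n ?_ ?_
  all_goals filter_upwards [eventually_ge_atTop (∑ i, a i)] with lam hlam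
  · exact pow_le_factorial_mul_prod_mul_latticeCount hb (sub_nonneg.2 hlam)
  · have h := factorial_mul_prod_mul_latticeCount_le hb (sub_nonneg.2 hlam)
    rwa [← mul_sum, show lam - ∑ i, a i + 2 * ∑ i, a i = lam + ∑ i, a i by ring] at h

theorem stmt_8 (n : ℕ) (hn : 1 ≤ n) (a : Fin n → ℝ) (ha : ∀ i, 0 < a i) :
    Tendsto
      (fun lam : ℝ =>
        (Nat.card {k : Fin n → ℕ // ∑ i, a i * (2 * (k i : ℝ) + 1) ≤ lam} : ℝ) / lam ^ n)
      atTop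
      (nhds (1 / (2 ^ n * (Nat.factorial n : ℝ) * ∏ i, a i))) :=
  stmt_8_general n a ha
end

section
/- For positive reals a_1, ..., a_n and λ > 0, the supremum over nonnegative integers k_1, ..., k_n with Σ_{i=1}^n a_i(2k_i+1) ≤ λ of Π_{i=1}^n (k_i + 1) is at most λ^n/(2^n n^n Π a_i) + C·λ^(n-1) for some constant C depending only on a_1,...,a_n and n. -/
/-!
Put `z i = 2 a i (k i + 1)`. Then `∑ z i = ∑ a i (2 k i + 1) + ∑ a i ≤ λ + ∑ a i`, so AM-GM gives
`2ⁿ (∏ a i) ∏ (k i + 1) = ∏ z i ≤ ((λ + ∑ a i) / n)ⁿ`. Since every admissible `k` has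
`∑ a i ≤ λ`, the mean value bound `(λ + s)ⁿ ≤ λⁿ + n 2ⁿ⁻¹ s λⁿ⁻¹` for `0 ≤ s ≤ λ` turns the
error into `O(λⁿ⁻¹)`.
-/

open Finset

theorem Real.prod_le_sum_div_card_pow {ι : Type*} (s : Finset ι) (z : ι → ℝ)
    (hz : ∀ i ∈ s, 0 ≤ z i) : ∏ i ∈ s, z i ≤ ((∑ i ∈ s, z i) / #s) ^ #s := by
  rcases s.eq_empty_or_nonempty with rfl | hs
  · simp
  have hcard : (#s : ℝ) ≠ 0 := by exact_mod_cast hs.card_pos.ne'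
  have amgm := Real.geom_mean_le_arith_mean s (fun _ ↦ 1) z (fun _ _ ↦ zero_le_one)
    (by simpa using hs.card_pos) hz
  simp only [Real.rpow_one, one_mul, sum_const, nsmul_eq_mul, mul_one] at amgm
  calc ∏ i ∈ s, z i = ((∏ i ∈ s, z i) ^ (#s : ℝ)⁻¹) ^ #s :=
        (Real.rpow_inv_natCast_pow (prod_nonneg hz) (by exact_mod_cast hcard)).symm
    _ ≤ ((∑ i ∈ s, z i) / #s) ^ #s := by gcongr; exact Real.rpow_nonneg (prod_nonneg hz) _

theorem add_pow_le_pow_add_mul {x s : ℝ} (hs : 0 ≤ s) (hsx : s ≤ x) (n : ℕ) :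
    (x + s) ^ n ≤ x ^ n + n * 2 ^ (n - 1) * s * x ^ (n - 1) := by
  have hx : 0 ≤ x := hs.trans hsx
  have mvt := abs_pow_sub_pow_le (x + s) x n
  rw [abs_of_nonneg (sub_nonneg.2 (pow_le_pow_left₀ hx (by linarith) n)), add_sub_cancel_left,
    abs_of_nonneg hs, abs_of_nonneg (by linarith), abs_of_nonneg hx, max_eq_left (by linarith)] at mvt
  have : (x + s) ^ (n - 1) ≤ 2 ^ (n - 1) * x ^ (n - 1) := by
    rw [← mul_pow]; gcongr; linarith
  nlinarith [show (0 : ℝ) ≤ s * n by positivity]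

theorem natCast_pow_self_pos (n : ℕ) : (0 : ℝ) < (n : ℝ) ^ n := by
  rcases n.eq_zero_or_pos with rfl | hn
  · simp
  · positivity

theorem prod_add_one_le_pow_div {ι : Type*} [Fintype ι] (a : ι → ℝ) (ha : ∀ i, 0 < a i)
    (k : ι → ℕ) :
    ∏ i, ((k i : ℝ) + 1) ≤ (∑ i, a i * (2 * (k i : ℝ) + 1) + ∑ i, a i) ^ Fintype.card ι /
      (2 ^ Fintype.card ι * (Fintype.card ι : ℝ) ^ Fintype.card ι * ∏ i, a i) := by
  set N := Fintype.card ι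
  set z : ι → ℝ := fun i ↦ 2 * a i * ((k i : ℝ) + 1)
  have hz_sum : ∑ i, z i = ∑ i, a i * (2 * (k i : ℝ) + 1) + ∑ i, a i := by
    rw [← sum_add_distrib]; exact sum_congr rfl fun i _ ↦ by ring
  have hz_prod : ∏ i, z i = 2 ^ N * (∏ i, a i) * ∏ i, ((k i : ℝ) + 1) := by
    simp only [z, prod_mul_distrib, prod_const, card_univ, N]
  have amgm := Real.prod_le_sum_div_card_pow univ z fun i _ ↦ by
    have := (ha i).le; positivity
  rw [hz_prod, hz_sum, card_univ, div_pow] at amgm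
  have hprod : 0 < ∏ i, a i := prod_pos fun i _ ↦ ha i
  have := natCast_pow_self_pos N
  rw [le_div_iff₀ (by positivity)]
  rw [le_div_iff₀ this] at amgm
  linarith

theorem stmt_10_general (n : ℕ) (a : Fin n → ℝ) (ha : ∀ i, 0 < a i) :
    ∃ C : ℝ, ∀ lam : ℝ, 0 < lam →
      ∀ k : Fin n → ℕ, ∑ i, a i * (2 * (k i : ℝ) + 1) ≤ lam →
        (∏ i, ((k i : ℝ) + 1)) ≤
          lam ^ n / (2 ^ n * (n : ℝ) ^ n * ∏ i, a i) + C * lam ^ (n - 1) := by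
  set S := ∑ i, a i
  set D := 2 ^ n * (n : ℝ) ^ n * ∏ i, a i
  have hD : 0 < D := by
    have := natCast_pow_self_pos n
    have := prod_pos fun i (_ : i ∈ univ) ↦ ha i
    positivity
  have hS : 0 ≤ S := sum_nonneg fun i _ ↦ (ha i).le
  refine ⟨n * 2 ^ (n - 1) * S / D, fun lam _ k hk ↦ ?_⟩
  have hk_nonneg : 0 ≤ ∑ i, a i * (2 * (k i : ℝ) + 1) := sum_nonneg fun i _ ↦ by
    have := (ha i).le; positivity
  have hS_le : S ≤ lam := (sum_le_sum fun i _ ↦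
    le_mul_of_one_le_right (ha i).le (by linarith [(k i).cast_nonneg (α := ℝ)])).trans hk
  calc ∏ i, ((k i : ℝ) + 1)
      ≤ (∑ i, a i * (2 * (k i : ℝ) + 1) + S) ^ n / D := by
        simpa using prod_add_one_le_pow_div a ha k
    _ ≤ (lam ^ n + n * 2 ^ (n - 1) * S * lam ^ (n - 1)) / D := by
        gcongr
        exact (pow_le_pow_left₀ (by positivity) (by linarith) n).trans
          (add_pow_le_pow_add_mul hS hS_le n)
    _ = lam ^ n / D + n * 2 ^ (n - 1) * S / D * lam ^ (n - 1) := by ring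

theorem stmt_10 (n : ℕ) (hn : 1 ≤ n) (a : Fin n → ℝ) (ha : ∀ i, 0 < a i) :
    ∃ C : ℝ, ∀ lam : ℝ, 0 < lam →
      ∀ k : Fin n → ℕ, ∑ i, a i * (2 * (k i : ℝ) + 1) ≤ lam →
        (∏ i, ((k i : ℝ) + 1)) ≤
          lam ^ n / (2 ^ n * (n : ℝ) ^ n * ∏ i, a i) + C * lam ^ (n - 1) :=
  stmt_10_general n a ha
end

section
/- For positive reals a_1, ..., a_n and λ > Σ a_i, the supremum over nonnegative integers k_1, ..., k_n with Σ_{i=1}^n a_i(2k_i+1) ≤ λ of Π_{i=1}^n (k_i + 1) is at least (λ - Σ a_i)^n/(2^n n^n Π a_i) - C·λ^(n-1) for some constant C depending only on a_1,...,a_n and n; in particular the supremum is ≥ λ^n/(2^n n^n Π a_i) + o(λ^n). -/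
/-!
The continuous relaxation of the problem is solved by AM–GM: the real point
`x i = (λ - ∑ a) / (2 n a i)` spends exactly the budget `λ - ∑ a` on `∑ 2 a i x i`, equally among
the coordinates, and `∏ x i` is exactly the main term. Rounding down, `k i = ⌊x i⌋₊`, keeps the
point feasible while `k i + 1 > x i`, so the bound holds with `C = 0`.
-/

open Finset

section Rounding

variable {ι : Type*} {s : Finset ι} {a x : ι → ℝ}

theorem Finset.prod_le_prod_natFloor_add_one (hx : ∀ i ∈ s, 0 ≤ x i) :
    ∏ i ∈ s, x i ≤ ∏ i ∈ s, ((⌊x i⌋₊ : ℝ) + 1) :=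
  prod_le_prod hx fun i _ ↦ (Nat.lt_floor_add_one (x i)).le

theorem Finset.sum_mul_two_natFloor_add_one_le (ha : ∀ i ∈ s, 0 ≤ a i)
    (hx : ∀ i ∈ s, 0 ≤ x i) :
    ∑ i ∈ s, a i * (2 * (⌊x i⌋₊ : ℝ) + 1) ≤ ∑ i ∈ s, a i * (2 * x i + 1) :=
  sum_le_sum fun i hi ↦ by
    have := Nat.floor_le (hx i hi)
    gcongr
    exact ha i hi

end Rounding

section EqualShare

variable {ι : Type*} [Fintype ι] (a : ι → ℝ) (d : ℝ)

theorem sum_mul_two_equalShare_add_one_le (ha : ∀ i, a i ≠ 0) (hd : 0 ≤ d) :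
    ∑ i, a i * (2 * (d / (2 * Fintype.card ι * a i)) + 1) ≤ d + ∑ i, a i := by
  have hterm : ∀ i, a i * (2 * (d / (2 * Fintype.card ι * a i)) + 1)
      = d / Fintype.card ι + a i := fun i ↦ by
    have := ha i
    field_simp
  simp only [hterm, sum_add_distrib, sum_const, card_univ, nsmul_eq_mul]
  gcongr
  rcases eq_or_ne (Fintype.card ι : ℝ) 0 with h | h
  · simpa [h] using hd
  · rw [mul_div_cancel₀ _ h]

theorem prod_equalShare :
    ∏ i, d / (2 * Fintype.card ι * a i)
      = d ^ Fintype.card ι / (2 ^ Fintype.card ι * (Fintype.card ι : ℝ) ^ Fintype.card ι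
          * ∏ i, a i) := by
  simp only [prod_div_distrib, prod_mul_distrib, prod_const, card_univ]

end EqualShare

theorem stmt_11_general (n : ℕ) (a : Fin n → ℝ) (ha : ∀ i, 0 < a i) :
    ∃ C : ℝ, ∀ lam : ℝ, (∑ i, a i) < lam →
      ∃ k : Fin n → ℕ, (∑ i, a i * (2 * (k i : ℝ) + 1) ≤ lam) ∧
        (lam - ∑ i, a i) ^ n / (2 ^ n * (n : ℝ) ^ n * ∏ i, a i) - C * lam ^ (n - 1) ≤
          ∏ i, ((k i : ℝ) + 1) := by
  refine ⟨0, fun lam hlam ↦ ?_⟩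
  set d := lam - ∑ i, a i
  have hd : 0 ≤ d := sub_nonneg.mpr hlam.le
  set x : Fin n → ℝ := fun i ↦ d / (2 * n * a i)
  have hx : ∀ i ∈ univ, 0 ≤ x i := fun i _ ↦ by have := ha i; positivity
  have hfeasible := sum_mul_two_equalShare_add_one_le a d (fun i ↦ (ha i).ne') hd
  have hprod := prod_equalShare a d
  simp only [Fintype.card_fin] at hfeasible hprod
  refine ⟨fun i ↦ ⌊x i⌋₊, ?_, ?_⟩
  · calc ∑ i, a i * (2 * (⌊x i⌋₊ : ℝ) + 1)
        ≤ ∑ i, a i * (2 * x i + 1) :=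
          sum_mul_two_natFloor_add_one_le (fun i _ ↦ (ha i).le) hx
      _ ≤ lam := by linarith
  · rw [zero_mul, sub_zero, ← hprod]
    exact prod_le_prod_natFloor_add_one hx

theorem stmt_11 (n : ℕ) (hn : 1 ≤ n) (a : Fin n → ℝ) (ha : ∀ i, 0 < a i) :
    ∃ C : ℝ, ∀ lam : ℝ, (∑ i, a i) < lam →
      ∃ k : Fin n → ℕ, (∑ i, a i * (2 * (k i : ℝ) + 1) ≤ lam) ∧
        (lam - ∑ i, a i) ^ n / (2 ^ n * (n : ℝ) ^ n * ∏ i, a i) - C * lam ^ (n - 1) ≤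
          ∏ i, ((k i : ℝ) + 1) :=
  stmt_11_general n a ha
end

section
/- Define U(n) = n!/n^n and γ(n) = 2^(n-2)·n²·Γ(n/2)²/(j_{n/2-1})^n, where j_{n/2-1} is the first positive zero of the Bessel function J_{n/2-1}. Assuming the bound j_u < √(u+1)·(√(u+2)+1) for all u > 0, one has U(n) < γ(n) for all integers n ≥ 2. -/
/-!
Squaring the bound on `j` gives `j_{n/2-1}² < 3n(n+2)/4`, so it suffices that
`16·3ⁿ(n+2)ⁿ(n!)² ≤ 2^{4n} n^{n+4} Γ(n/2)⁴`. This holds at `n = 1` (where it reads `9 ≤ π²`) and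
`n = 2`, and by `Γ(n/2+1) = (n/2)Γ(n/2)` the step from `n` to `n+2` reduces to
`9(n+4)^{n+2}(n+1)² nⁿ ≤ 16(n+2)^{2n+4}`, a consequence of `n(n+4) ≤ (n+2)²` and
`3(n+4)(n+1) ≤ 4(n+2)²`.
-/

open Real Nat

lemma sq_sqrt_mul_sqrt_add_one_le {u : ℝ} (hu : 0 ≤ u) :
    (√(u + 1) * (√(u + 2) + 1)) ^ 2 ≤ 3 * (u + 1) * (u + 2) := by
  have hs₁ : √(u + 1) ^ 2 = u + 1 := sq_sqrt (by linarith)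
  have hs₂ : √(u + 2) ^ 2 = u + 2 := sq_sqrt (by linarith)
  have hs₂_le : √(u + 2) ≤ u + 3 / 2 := by
    rw [show u + 3 / 2 = √((u + 3 / 2) ^ 2) from (sqrt_sq (by linarith)).symm]
    exact sqrt_le_sqrt (by nlinarith)
  nlinarith [sqrt_nonneg (u + 1), sqrt_nonneg (u + 2)]

lemma nine_mul_add_four_pow_le {x : ℝ} (hx : 0 ≤ x) (n : ℕ) :
    9 * (x + 4) ^ (n + 2) * (x + 1) ^ 2 * x ^ n ≤ 16 * (x + 2) ^ (2 * n + 4) := by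
  have h_amgm : x ^ n * (x + 4) ^ n ≤ (x + 2) ^ (2 * n) := by
    rw [← mul_pow, pow_mul]
    exact pow_le_pow_left₀ (by positivity) (by nlinarith) n
  have h_quad : 3 * (x + 4) * (x + 1) ≤ 4 * (x + 2) ^ 2 := by nlinarith
  have h_quad_sq : 9 * (x + 4) ^ 2 * (x + 1) ^ 2 ≤ 16 * (x + 2) ^ 4 := by
    nlinarith [mul_self_le_mul_self (by positivity) h_quad]
  calc 9 * (x + 4) ^ (n + 2) * (x + 1) ^ 2 * x ^ n
      = x ^ n * (x + 4) ^ n * (9 * (x + 4) ^ 2 * (x + 1) ^ 2) := by ring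
    _ ≤ (x + 2) ^ (2 * n) * (16 * (x + 2) ^ 4) :=
      mul_le_mul h_amgm h_quad_sq (by positivity) (by positivity)
    _ = 16 * (x + 2) ^ (2 * n + 4) := by ring

lemma factorial_sq_le_gamma_half_pow_four_add_two {n : ℕ} (hn : 0 < n)
    (h : 16 * 3 ^ n * ((n : ℝ) + 2) ^ n * (n ! : ℝ) ^ 2 ≤
      2 ^ (4 * n) * (n : ℝ) ^ (n + 4) * Gamma (n / 2) ^ 4) :
    16 * 3 ^ (n + 2) * (((n + 2 : ℕ) : ℝ) + 2) ^ (n + 2) * ((n + 2)! : ℝ) ^ 2 ≤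
      2 ^ (4 * (n + 2)) * ((n + 2 : ℕ) : ℝ) ^ (n + 2 + 4) * Gamma ((n + 2 : ℕ) / 2) ^ 4 := by
  set x : ℝ := (n : ℝ)
  have hx : 0 < x := by positivity
  have h_fac : ((n + 2)! : ℝ) = (x + 2) * (x + 1) * n ! := by
    push_cast [factorial_succ]; ring
  have h_gamma : Gamma ((n + 2 : ℕ) / 2) = x / 2 * Gamma (x / 2) := by
    rw [show ((n + 2 : ℕ) : ℝ) / 2 = x / 2 + 1 by push_cast; ring, Gamma_add_one (by positivity)]
  rw [h_fac, h_gamma, show ((n + 2 : ℕ) : ℝ) = x + 2 by push_cast; ring]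
  refine le_of_mul_le_mul_right ?_ (show 0 < x ^ (n + 4) by positivity)
  calc 16 * 3 ^ (n + 2) * (x + 2 + 2) ^ (n + 2) * ((x + 2) * (x + 1) * n !) ^ 2 * x ^ (n + 4)
      = (9 * (x + 4) ^ (n + 2) * (x + 1) ^ 2 * x ^ n) *
          (16 * 3 ^ n * (n ! : ℝ) ^ 2 * (x + 2) ^ 2 * x ^ 4) := by ring
    _ ≤ (16 * (x + 2) ^ (2 * n + 4)) * (16 * 3 ^ n * (n ! : ℝ) ^ 2 * (x + 2) ^ 2 * x ^ 4) :=
      mul_le_mul_of_nonneg_right (nine_mul_add_four_pow_le hx.le n) (by positivity)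
    _ = (16 * (x + 2) ^ (n + 6) * x ^ 4) * (16 * 3 ^ n * (x + 2) ^ n * (n ! : ℝ) ^ 2) := by ring
    _ ≤ (16 * (x + 2) ^ (n + 6) * x ^ 4) * (2 ^ (4 * n) * x ^ (n + 4) * Gamma (x / 2) ^ 4) :=
      mul_le_mul_of_nonneg_left h (by positivity)
    _ = 2 ^ (4 * (n + 2)) * (x + 2) ^ (n + 2 + 4) * (x / 2 * Gamma (x / 2)) ^ 4 * x ^ (n + 4) := by
      ring

lemma factorial_sq_le_gamma_half_pow_four {n : ℕ} (hn : 0 < n) :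
    16 * 3 ^ n * ((n : ℝ) + 2) ^ n * (n ! : ℝ) ^ 2 ≤
      2 ^ (4 * n) * (n : ℝ) ^ (n + 4) * Gamma (n / 2) ^ 4 := by
  obtain ⟨k, rfl⟩ : ∃ k, n = k + 1 := ⟨n - 1, by omega⟩
  induction k using Nat.twoStepInduction with
  | zero =>
    have h_pi : Gamma (1 / 2) ^ 4 = π ^ 2 := by
      rw [Gamma_one_half_eq, show (4 : ℕ) = 2 * 2 from rfl, pow_mul, sq_sqrt pi_nonneg]
    norm_num [h_pi]
    nlinarith [pi_gt_three]
  | one =>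
    norm_num [Gamma_one]
  | more k ih _ =>
    exact factorial_sq_le_gamma_half_pow_four_add_two (by omega) (ih (by omega))

lemma factorial_div_pow_lt_of_sq_lt {n : ℕ} (hn : 0 < n) {J : ℝ} (hJ : 0 < J)
    (hJ_sq : J ^ 2 < 3 * n * (n + 2) / 4) :
    (n ! : ℝ) / n ^ n < 2 ^ ((n : ℝ) - 2) * n ^ 2 * Gamma (n / 2) ^ 2 / J ^ n := by
  set x : ℝ := (n : ℝ)
  have hx : 0 < x := by positivity
  rw [rpow_sub two_pos, rpow_natCast, div_lt_div_iff₀ (by positivity) (by positivity)]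
  refine lt_of_pow_lt_pow_left₀ 2 (by positivity) ?_
  have hJ_pow : (J ^ 2) ^ n < (3 * x * (x + 2) / 4) ^ n :=
    pow_lt_pow_left₀ hJ_sq (by positivity) hn.ne'
  have h_gamma := factorial_sq_le_gamma_half_pow_four hn
  refine lt_of_mul_lt_mul_right ?_ (show 0 ≤ 16 * 4 ^ n by positivity)
  calc ((n ! : ℝ) * J ^ n) ^ 2 * (16 * 4 ^ n)
      = (n ! : ℝ) ^ 2 * (J ^ 2) ^ n * (16 * 4 ^ n) := by ring
    _ < (n ! : ℝ) ^ 2 * (3 * x * (x + 2) / 4) ^ n * (16 * 4 ^ n) := by gcongr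
    _ = 16 * 3 ^ n * (x + 2) ^ n * (n ! : ℝ) ^ 2 * x ^ n := by
      rw [div_pow, mul_pow, mul_pow]; field_simp
    _ ≤ 2 ^ (4 * n) * x ^ (n + 4) * Gamma (x / 2) ^ 4 * x ^ n := by gcongr
    _ = (2 ^ n / 2 ^ (2 : ℝ) * x ^ 2 * Gamma (x / 2) ^ 2 * x ^ n) ^ 2 * (16 * 4 ^ n) := by
      rw [rpow_two, show (4 : ℝ) ^ n = (2 ^ n) ^ 2 by rw [← pow_mul, pow_mul']; norm_num,
        show (2 : ℝ) ^ (4 * n) = (2 ^ n) ^ 4 by rw [← pow_mul, mul_comm]]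
      field_simp
      ring

/-- `U(n) = n!/n^n < γ(n) = 2^(n-2) n² Γ(n/2)² / j_{n/2-1}^n` for all `n ≥ 2`,
where `j u` denotes the first positive zero of the Bessel function `J_u`,
assumed (as a hypothesis) to be positive and to satisfy
`j u < √(u+1) (√(u+2)+1)`. -/
theorem stmt_12 (j : ℝ → ℝ) (hjpos : ∀ u ≥ (0:ℝ), 0 < j u)
    (hj : ∀ u ≥ (0:ℝ), j u < Real.sqrt (u + 1) * (Real.sqrt (u + 2) + 1)) :
    ∀ n : ℕ, 2 ≤ n →
      (Nat.factorial n : ℝ) / (n : ℝ) ^ n <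
        (2 : ℝ) ^ ((n : ℝ) - 2) * (n : ℝ) ^ 2 * Real.Gamma ((n : ℝ) / 2) ^ 2 /
          (j ((n : ℝ) / 2 - 1)) ^ n := by
  intro n hn
  have hu : (0 : ℝ) ≤ n / 2 - 1 := by
    have : (2 : ℝ) ≤ n := by exact_mod_cast hn
    linarith
  have hj_pos := hjpos _ hu
  refine factorial_div_pow_lt_of_sq_lt (by omega) hj_pos ?_
  calc j (n / 2 - 1) ^ 2
      < (√(n / 2 - 1 + 1) * (√(n / 2 - 1 + 2) + 1)) ^ 2 :=
        pow_lt_pow_left₀ (hj _ hu) hj_pos.le two_ne_zero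
    _ ≤ 3 * (n / 2 - 1 + 1) * (n / 2 - 1 + 2) := sq_sqrt_mul_sqrt_add_one_le hu
    _ = 3 * n * (n + 2) / 4 := by ring
end

section
/- Assuming j_{k-1} < √2·k for real k > 10 (where j_ν is the first positive zero of the Bessel function J_ν), for all even n = 2k with k > 10 one has γ(n)/U(n) = 2^(4k)·(k!)²·k^(2k) / ((2k)!·(j_{k-1})^(2k)) > 1, where γ(n) = 2^(n-2)n²Γ(n/2)²/(j_{n/2-1})^n and U(n) = n!/n^n. -/
/-!
Since `Γ(k) = (k-1)!`, the left-hand side of the identity is `2^(4k) (k!)² k^(2k) / ((2k)! j^(2k))`.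
For the inequality, `(2k)! = C(2k, k) (k!)² ≤ 4^k (k!)²` and `j^(2k) < (√2 k)^(2k) = 2^k k^(2k)`,
so the quotient exceeds `2^(4k) / (4^k 2^k) = 2^k ≥ 1`.
-/

open Nat

lemma Nat.factorial_two_mul_le_four_pow_mul_factorial_sq (k : ℕ) :
    (2 * k)! ≤ 4 ^ k * k ! ^ 2 := by
  have h := Nat.add_choose_mul_factorial_mul_factorial k k
  rw [← two_mul, ← Nat.centralBinom_eq_two_mul_choose] at h
  rw [← h, sq, ← mul_assoc]
  gcongr
  exact Nat.centralBinom_le_four_pow k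

lemma Real.two_pow_mul_sq_mul_Gamma_sq {k : ℕ} (hk : k ≠ 0) :
    (2 : ℝ) ^ (2 * k - 2) * (2 * (k : ℝ)) ^ 2 * Real.Gamma k ^ 2 = 4 ^ k * (k ! : ℝ) ^ 2 := by
  obtain ⟨m, rfl⟩ : ∃ m, k = m + 1 := ⟨k - 1, by omega⟩
  rw [Nat.cast_succ, Real.Gamma_nat_eq_factorial, Nat.factorial_succ,
    show 2 * (m + 1) - 2 = 2 * m by omega, pow_mul, pow_succ 4]
  push_cast
  ring

lemma pow_two_mul_lt_of_lt_sqrt_two_mul {j x : ℝ} (hj0 : 0 ≤ j) (hj : j < √2 * x) {k : ℕ}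
    (hk : k ≠ 0) : j ^ (2 * k) < 2 ^ k * x ^ (2 * k) := by
  calc j ^ (2 * k) < (√2 * x) ^ (2 * k) := pow_lt_pow_left₀ hj hj0 (by omega)
    _ = 2 ^ k * x ^ (2 * k) := by
      rw [mul_pow, pow_mul, Real.sq_sqrt zero_le_two]

theorem stmt_13_general (k : ℕ) (j : ℝ) (hj0 : 0 < j)
    (hj : j < Real.sqrt 2 * k) :
    (2 : ℝ) ^ (2 * k - 2) * (2 * (k : ℝ)) ^ 2 * Real.Gamma (k : ℝ) ^ 2 * (2 * (k : ℝ)) ^ (2 * k) /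
        ((Nat.factorial (2 * k) : ℝ) * j ^ (2 * k)) =
      2 ^ (4 * k) * (Nat.factorial k : ℝ) ^ 2 * (k : ℝ) ^ (2 * k) /
        ((Nat.factorial (2 * k) : ℝ) * j ^ (2 * k)) ∧
    1 < 2 ^ (4 * k) * (Nat.factorial k : ℝ) ^ 2 * (k : ℝ) ^ (2 * k) /
        ((Nat.factorial (2 * k) : ℝ) * j ^ (2 * k)) := by
  have hk : k ≠ 0 := by
    rintro rfl
    simp only [Nat.cast_zero, mul_zero] at hj
    linarith
  have h16 : (2 : ℝ) ^ (4 * k) = 4 ^ k * (2 ^ k * 2 ^ k) := by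
    rw [← mul_pow, ← mul_pow, pow_mul]
    norm_num
  constructor
  · rw [Real.two_pow_mul_sq_mul_Gamma_sq hk, mul_pow, h16]
    ring_nf
  · have hfact : ((2 * k)! : ℝ) ≤ 4 ^ k * (k ! : ℝ) ^ 2 := by
      exact_mod_cast Nat.factorial_two_mul_le_four_pow_mul_factorial_sq k
    have hjpow := pow_two_mul_lt_of_lt_sqrt_two_mul hj0.le hj hk
    rw [one_lt_div (by positivity)]
    calc ((2 * k)! : ℝ) * j ^ (2 * k)
        < (4 ^ k * (k ! : ℝ) ^ 2) * (2 ^ k * (k : ℝ) ^ (2 * k)) :=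
          mul_lt_mul' hfact hjpow (by positivity) (by positivity)
      _ ≤ (4 ^ k * (k ! : ℝ) ^ 2) * (2 ^ k * (k : ℝ) ^ (2 * k)) * 2 ^ k :=
          le_mul_of_one_le_right (by positivity) (one_le_pow₀ one_le_two)
      _ = 2 ^ (4 * k) * (k ! : ℝ) ^ 2 * (k : ℝ) ^ (2 * k) := by
          rw [h16]
          ring

/-- Even case `n = 2k`, `k > 10`:
`γ(n)/U(n) = 2^(4k) (k!)² k^(2k) / ((2k)! j_{k-1}^(2k)) > 1`,
where `j` is the first positive zero of `J_{k-1}`, assumed to satisfy `j < √2 k`. -/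
theorem stmt_13 (k : ℕ) (hk : 10 < k) (j : ℝ) (hj0 : 0 < j)
    (hj : j < Real.sqrt 2 * k) :
    (2 : ℝ) ^ (2 * k - 2) * (2 * (k : ℝ)) ^ 2 * Real.Gamma (k : ℝ) ^ 2 * (2 * (k : ℝ)) ^ (2 * k) /
        ((Nat.factorial (2 * k) : ℝ) * j ^ (2 * k)) =
      2 ^ (4 * k) * (Nat.factorial k : ℝ) ^ 2 * (k : ℝ) ^ (2 * k) /
        ((Nat.factorial (2 * k) : ℝ) * j ^ (2 * k)) ∧
    1 < 2 ^ (4 * k) * (Nat.factorial k : ℝ) ^ 2 * (k : ℝ) ^ (2 * k) /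
        ((Nat.factorial (2 * k) : ℝ) * j ^ (2 * k)) :=
  stmt_13_general k j hj0 hj
end

section
/- Assuming j_{k-1/2} < √2·k for integer k > 10, for all odd n = 2k+1 with k > 10 one has γ(n)/U(n) = π·(2k+1)!·(2k+1)^(2k+1) / ((j_{k-1/2})^(2k+1)·2^(2k+1)·(k!)²) > 1. -/
lemma gamma_half (k : ℕ) :
    Real.Gamma ((k:ℝ) + 1/2) =
      (Nat.factorial (2*k) : ℝ) * Real.sqrt Real.pi / (4^k * Nat.factorial k) := by
  induction k with
  | zero => simpa using Real.Gamma_one_half_eq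
  | succ n ih =>
    have hne : ((n:ℝ) + 1/2) ≠ 0 := by positivity
    have h1 : ((n+1 : ℕ):ℝ) + 1/2 = ((n:ℝ) + 1/2) + 1 := by push_cast; ring
    rw [h1, Real.Gamma_add_one hne, ih]
    have hf1 : (Nat.factorial (2*(n+1)) : ℝ) = (2*n+2) * ((2*n+1) * Nat.factorial (2*n)) := by
      have h : 2*(n+1) = (2*n+1) + 1 := by ring
      rw [h, Nat.factorial_succ, Nat.factorial_succ]
      push_cast; ring
    have hf2 : (Nat.factorial (n+1) : ℝ) = (n+1) * Nat.factorial n := by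
      rw [Nat.factorial_succ]; push_cast; ring
    rw [hf1, hf2]
    have hn : (Nat.factorial n : ℝ) ≠ 0 := by
      exact_mod_cast (Nat.factorial_pos n).ne'
    have h2 : ((2:ℝ)*n+2) ≠ 0 := by positivity
    field_simp
    ring

/-- Odd case `n = 2k+1`, `k > 10`:
`γ(n)/U(n) = π (2k+1)! (2k+1)^(2k+1) / (j_{k-1/2}^(2k+1) 2^(2k+1) (k!)²) > 1`,
where `j` is the first positive zero of `J_{k-1/2}`, assumed to satisfy `j < √2 k`. -/
theorem stmt_14 (k : ℕ) (hk : 10 < k) (j : ℝ) (hj0 : 0 < j)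
    (hj : j < Real.sqrt 2 * k) :
    (2 : ℝ) ^ (2 * k - 1) * (2 * (k : ℝ) + 1) ^ 2 * Real.Gamma ((k : ℝ) + 1 / 2) ^ 2 *
        (2 * (k : ℝ) + 1) ^ (2 * k + 1) /
        ((Nat.factorial (2 * k + 1) : ℝ) * j ^ (2 * k + 1)) =
      Real.pi * (Nat.factorial (2 * k + 1) : ℝ) * (2 * (k : ℝ) + 1) ^ (2 * k + 1) /
        (j ^ (2 * k + 1) * 2 ^ (2 * k + 1) * (Nat.factorial k : ℝ) ^ 2) ∧
    1 < Real.pi * (Nat.factorial (2 * k + 1) : ℝ) * (2 * (k : ℝ) + 1) ^ (2 * k + 1) /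
        (j ^ (2 * k + 1) * 2 ^ (2 * k + 1) * (Nat.factorial k : ℝ) ^ 2) := by
  have hkpos : (0:ℝ) < k := by exact_mod_cast (show 0 < k by omega)
  have hF1 : (0:ℝ) < (Nat.factorial k : ℝ) := by exact_mod_cast Nat.factorial_pos k
  have hF2 : (0:ℝ) < (Nat.factorial (2*k) : ℝ) := by exact_mod_cast Nat.factorial_pos (2*k)
  have hF3 : (Nat.factorial (2*k+1) : ℝ) = (2*(k:ℝ)+1) * (Nat.factorial (2*k) : ℝ) := by
    rw [Nat.factorial_succ]; push_cast; ring
  constructor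
  · -- identity
    have hG2 : Real.Gamma ((k:ℝ) + 1/2) ^ 2 =
        (Nat.factorial (2*k) : ℝ)^2 * Real.pi / ((4:ℝ)^k * Nat.factorial k)^2 := by
      rw [gamma_half, div_pow, mul_pow, Real.sq_sqrt Real.pi_pos.le]
    have h4 : (4:ℝ)^k = 2^(2*k) := by
      rw [show (4:ℝ) = 2^2 by norm_num, ← pow_mul]
    have h2 : (2:ℝ)^(2*k-1) = 2^(2*k) / 2 := by
      have h : 2*k - 1 + 1 = 2*k := by omega
      rw [eq_div_iff (by norm_num : (2:ℝ) ≠ 0), ← pow_succ, h]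
    rw [hG2, hF3, h4, h2]
    have hjne : j ≠ 0 := hj0.ne'
    have h2k1 : (2*(k:ℝ)+1) ≠ 0 := by positivity
    field_simp
    ring
  · -- inequality
    have hDpos : 0 < j ^ (2*k+1) * 2 ^ (2*k+1) * ((Nat.factorial k : ℝ))^2 := by positivity
    rw [one_lt_div hDpos]
    have hC : ((4:ℝ))^k < (k:ℝ) * (Nat.centralBinom k : ℝ) := by
      exact_mod_cast Nat.four_pow_lt_mul_centralBinom k (by omega)
    have hCB : (Nat.factorial (2*k) : ℝ) = (Nat.centralBinom k : ℝ) * (Nat.factorial k : ℝ)^2 := by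
      have h := Nat.choose_mul_factorial_mul_factorial (show k ≤ 2*k by omega)
      rw [show 2*k - k = k by omega] at h
      have h2 : Nat.factorial (2*k) = (2*k).choose k * (Nat.factorial k)^2 := by
        rw [← h]; ring
      rw [Nat.centralBinom_eq_two_mul_choose]
      exact_mod_cast h2
    have hs2 : Real.sqrt 2 < 2 := by
      nlinarith [Real.sq_sqrt (by norm_num : (0:ℝ) ≤ 2), Real.sqrt_nonneg 2]
    have hsnn : (0:ℝ) ≤ Real.sqrt 2 := Real.sqrt_nonneg 2
    have hk2 : (k:ℝ) < 2^k := by exact_mod_cast Nat.lt_two_pow_self (n := k)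
    have hCpos : (0:ℝ) < (Nat.centralBinom k : ℝ) := by exact_mod_cast Nat.centralBinom_pos k
    have hpi : (3:ℝ) < Real.pi := Real.pi_gt_three
    have key : Real.sqrt 2 * (2:ℝ)^k < Real.pi * (Nat.centralBinom k : ℝ) := by
      have h4e : ((4:ℝ))^k = 2^k * 2^k := by
        rw [show (4:ℝ) = 2*2 by norm_num, mul_pow]
      have hstep : Real.sqrt 2 * (2:ℝ)^k * k < Real.pi * (Nat.centralBinom k : ℝ) * k := by
        have h2kpos : (0:ℝ) < (2:ℝ)^k := by positivity
        calc Real.sqrt 2 * (2:ℝ)^k * k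
            < 2 * (2:ℝ)^k * k :=
              mul_lt_mul_of_pos_right (mul_lt_mul_of_pos_right hs2 h2kpos) hkpos
          _ < 2 * ((2:ℝ)^k * 2^k) := by
              nlinarith [mul_lt_mul_of_pos_left hk2 h2kpos]
          _ < 3 * ((2:ℝ)^k * 2^k) := by nlinarith [mul_pos h2kpos h2kpos]
          _ = 3 * (4:ℝ)^k := by rw [h4e]
          _ < 3 * ((k:ℝ) * (Nat.centralBinom k : ℝ)) := by linarith
          _ < Real.pi * ((k:ℝ) * (Nat.centralBinom k : ℝ)) := by
              nlinarith [mul_pos hkpos hCpos]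
          _ = Real.pi * (Nat.centralBinom k : ℝ) * k := by ring
      exact lt_of_mul_lt_mul_right hstep hkpos.le
    have hs2pow : (Real.sqrt 2)^(2*k+1) = 2^k * Real.sqrt 2 := by
      rw [pow_succ, pow_mul, Real.sq_sqrt (by norm_num : (0:ℝ) ≤ 2)]
    have hXpos : (0:ℝ) < (k:ℝ)^(2*k+1) * 2^(2*k+1) * ((Nat.factorial k : ℝ))^2 := by positivity
    calc j ^ (2*k+1) * 2 ^ (2*k+1) * ((Nat.factorial k : ℝ))^2
        < (Real.sqrt 2 * k) ^ (2*k+1) * 2 ^ (2*k+1) * ((Nat.factorial k : ℝ))^2 := by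
          gcongr

      _ = (Real.sqrt 2 * (2:ℝ)^k) * ((k:ℝ)^(2*k+1) * 2^(2*k+1) * ((Nat.factorial k : ℝ))^2) := by
          rw [mul_pow, hs2pow]; ring
      _ < (Real.pi * (Nat.centralBinom k : ℝ)) * ((k:ℝ)^(2*k+1) * 2^(2*k+1) * ((Nat.factorial k : ℝ))^2) := by
          exact mul_lt_mul_of_pos_right key hXpos
      _ = Real.pi * (Nat.factorial (2*k) : ℝ) * (2*(k:ℝ))^(2*k+1) := by
          rw [hCB, mul_pow]; ring
      _ ≤ Real.pi * (Nat.factorial (2*k+1) : ℝ) * (2*(k:ℝ)+1)^(2*k+1) := by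
          gcongr <;> first | omega | positivity | linarith
end
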